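/- arXiv:2509.01867 — 5 statements merged into one kernel-verified Lean document; each statement's English description precedes it below -/
import Mathlib

section
/- A bi-infinite sequence x̄ of positive integers satisfies m(x̄) ≤ 3 if and only if: (1) there exist a bi-infinite word v̄ ∈ {a, b}^ℤ and k ∈ ℤ such that σᵏ(x̄) equals the blockwise image χ(v̄); and (2) for every i ∈ ℤ, if v̄_i = b and v̄_{i+1} = a then (v̄_{i−1}, v̄_{i−2}, …) ⪯ (v̄_{i+2}, v̄_{i+3}, …), and if v̄_i = a and v̄_{i+1} = b then (v̄_{i+2}, v̄_{i+3}, …) ⪯ (v̄_{i−1}, v̄_{i−2}, …), where ⪯ is the lexicographic order on one-sided infinite {a, b}-sequences induced by a < b. -/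
inductive AB
  | a
  | b

/-- The substitution χ on letters: both symbols of χ(a) = 22 are 2, both of χ(b) = 11 are 1. -/
def chiVal : AB → ℕ
  | AB.a => 2
  | AB.b => 1

/-- χ on finite words over {a, b}, producing a word over {1, 2}. -/
def chiW (w : List AB) : List ℕ :=
  w.flatMap (fun c => [chiVal c, chiVal c])

/-- χ on one-sided infinite words over {a, b}. -/
def chiInf (w : ℕ → AB) : ℕ → ℕ := fun i => chiVal (w (i / 2))

/-- Value of the finite continued fraction `[c₀; c₁, …, cₙ]` (0 for the empty list). -/
noncomputable def cfFin : List ℕ → ℝ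
  | [] => 0
  | c :: l => (c : ℝ) + (cfFin l)⁻¹

/-- Value `[x₀; x₁, x₂, …]` of an infinite continued fraction with entries `x`. -/
noncomputable def cfVal (x : ℕ → ℕ) : ℝ :=
  Filter.limUnder Filter.atTop (fun n : ℕ => cfFin ((List.range (n + 1)).map x))

/-- The height function λ(x) = [x₀; x₁, x₂, …] + [0; x₋₁, x₋₂, …] of a bi-infinite
sequence of positive integers. -/
noncomputable def lamZ (x : ℤ → ℕ) : ℝ :=
  cfVal (fun n : ℕ => x (n : ℤ)) + (cfVal (fun n : ℕ => x (-1 - (n : ℤ))))⁻¹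

/-- The shift on bi-infinite sequences. -/
def shiftZ (x : ℤ → ℕ) (k : ℤ) : ℤ → ℕ := fun i => x (i + k)

/-- The Markov value m(x) = sup_{n ∈ ℤ} λ(σⁿ x). -/
noncomputable def mVal (x : ℤ → ℕ) : EReal :=
  ⨆ k : ℤ, (lamZ (shiftZ x k) : EReal)

/-- The Lagrange value l(x) = limsup_{n → +∞} λ(σⁿ x). -/
noncomputable def lVal (x : ℤ → ℕ) : EReal :=
  Filter.limsup (fun n : ℕ => (lamZ (shiftZ x (n : ℤ)) : EReal)) Filter.atTop

/-- Lexicographic order on one-sided infinite {a, b}-sequences induced by a < b. -/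
def lexLe (s t : ℕ → AB) : Prop :=
  s = t ∨ ∃ k : ℕ, (∀ j < k, s j = t j) ∧ s k = AB.a ∧ t k = AB.b

/-!
`λ(σⁿ x)` splits as `[x_n; x_{n+1}, …] + 1 / [x_{n-1}; x_{n-2}, …]`, and continued fractions
with positive entries are ordered by the alternating lexicographic order of their entries. The
identities `[2; 2, t] + 1 / [1; 1, t] = 3` and `[2; 1, 1, t] + 1 / [2; t] = 3` turn `λ ≤ 3` at a
`2 2` or a `2 1 1` into such a comparison of two continued fractions.

If `m(x) ≤ 3`, every digit is `1` or `2` and `2 1 2` does not occur. An odd maximal run of `2`s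
(of `1`s) forces, through the `2 1 1` criterion at its end (its mirror image `1 1 2`), a shorter
odd run of the same digit right after it, so all runs are even and `x` is a χ-image. On
χ-images the alternating order becomes the lexicographic order of words over `{a, b}`, the
`2 2` criterion at the borders `ba` and `ab` is exactly the stated condition, and `λ ≤ 3` holds
trivially at every other position.
-/

open Filter Topology

def prepend {α : Type*} (a : α) (s : ℕ → α) : ℕ → α
  | 0 => a
  | n + 1 => s n

infixr:67 " ◂ " => prepend

theorem pos_prepend {c : ℕ} {y : ℕ → ℕ} (hc : 0 < c) (hy : ∀ i, 0 < y i) :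
    ∀ i, 0 < (c ◂ y) i
  | 0 => hc
  | i + 1 => hy i

noncomputable def cfStep (c : ℕ) (r : ℝ) : ℝ := c + r⁻¹

theorem cfFin_eq_foldr (l : List ℕ) : cfFin l = l.foldr cfStep 0 := by
  induction l with
  | nil => rfl
  | cons c l ih => rw [cfFin, ih]; rfl

theorem one_le_foldr_cfStep {l : List ℕ} (hl : ∀ c ∈ l, 0 < c) {t : ℝ} (ht : 1 ≤ t) :
    1 ≤ l.foldr cfStep t := by
  induction l with
  | nil => exact ht
  | cons c l ih =>
    have hc : (1 : ℝ) ≤ c := by exact_mod_cast hl c List.mem_cons_self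
    have hr := ih fun d hd => hl d (List.mem_cons_of_mem c hd)
    have : 0 ≤ (l.foldr cfStep t)⁻¹ := by positivity
    simp only [List.foldr_cons, cfStep]
    linarith

/-- Two steps contract by a factor `4`:
`[c; d, A] - [c; d, B] = (A - B) / ((d A + 1) (d B + 1))`. -/
theorem abs_foldr_cfStep_sub_le :
    ∀ (l : List ℕ), (∀ c ∈ l, 0 < c) → ∀ {s t : ℝ}, 1 ≤ s → 1 ≤ t →
    |l.foldr cfStep s - l.foldr cfStep t| ≤ 2 * (1 / 2) ^ l.length * |s - t|
  | [], _, s, t, _, _ => by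
    simp only [List.foldr_nil, List.length_nil, pow_zero, mul_one]
    linarith [abs_nonneg (s - t)]
  | [c], _, s, t, hs, ht => by
    have hs0 : 0 < s := by linarith
    have ht0 : 0 < t := by linarith
    have hst : (c + s⁻¹ : ℝ) - (c + t⁻¹) = (t - s) / (s * t) := by field_simp; ring
    simp only [List.foldr_cons, List.foldr_nil, cfStep, hst, List.length_singleton]
    have h1 : 1 ≤ s * t := one_le_mul_of_one_le_of_one_le hs ht
    rw [abs_div, abs_of_pos (mul_pos hs0 ht0), div_le_iff₀ (mul_pos hs0 ht0), abs_sub_comm]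
    nlinarith [abs_nonneg (s - t)]
  | c :: d :: l, hl, s, t, hs, ht => by
    have hl' : ∀ c ∈ l, 0 < c := fun e he => hl e (by simp [he])
    have hd : (1 : ℝ) ≤ d := by exact_mod_cast hl d (by simp)
    have hA := one_le_foldr_cfStep hl' hs
    have hB := one_le_foldr_cfStep hl' ht
    have hA0 : 0 < l.foldr cfStep s := by linarith
    have hB0 : 0 < l.foldr cfStep t := by linarith
    simp only [List.foldr_cons, cfStep, List.length_cons]
    set A := l.foldr cfStep s
    set B := l.foldr cfStep t
    have hAB : (c + (d + A⁻¹)⁻¹ : ℝ) - (c + (d + B⁻¹)⁻¹)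
        = (A - B) / ((d * A + 1) * (d * B + 1)) := by
      field_simp; ring
    have h4 : (4 : ℝ) ≤ (d * A + 1) * (d * B + 1) := by
      nlinarith [one_le_mul_of_one_le_of_one_le hd hA, one_le_mul_of_one_le_of_one_le hd hB]
    rw [hAB, abs_div, abs_of_pos (zero_lt_four.trans_le h4)]
    calc |A - B| / ((d * A + 1) * (d * B + 1)) ≤ |A - B| / 4 := by gcongr
      _ ≤ 2 * (1 / 2) ^ l.length * |s - t| / 4 := by
        gcongr; exact abs_foldr_cfStep_sub_le l hl' hs ht
      _ = 2 * (1 / 2) ^ (l.length + 1 + 1) * |s - t| := by ring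

theorem cfFin_map_range_succ (y : ℕ → ℕ) (n : ℕ) :
    cfFin ((List.range (n + 1)).map y) = ((List.range n).map y).foldr cfStep (y n) := by
  simp [List.range_succ, cfFin_eq_foldr, cfStep]

section ContinuedFraction
variable {y : ℕ → ℕ}

theorem tendsto_cfVal (hy : ∀ i, 0 < y i) :
    Tendsto (fun n => cfFin ((List.range (n + 1)).map y)) atTop (𝓝 (cfVal y)) := by
  refine (cauchySeq_of_le_geometric (1 / 2) 2 (by norm_num) fun n => ?_).tendsto_limUnder
  have hl : ∀ c ∈ (List.range n).map y, 0 < c := by simp [hy]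
  have hn : (1 : ℝ) ≤ y n := by exact_mod_cast hy n
  have hn' : (1 : ℝ) ≤ y (n + 1) := by exact_mod_cast hy (n + 1)
  have hsucc : cfFin ((List.range (n + 1 + 1)).map y)
      = ((List.range n).map y).foldr cfStep (cfStep (y n) (y (n + 1))) := by
    rw [cfFin_map_range_succ, List.range_succ, List.map_append, List.foldr_append]; rfl
  rw [Real.dist_eq, cfFin_map_range_succ, hsucc]
  have hstep : 1 ≤ cfStep (y n) (y (n + 1)) := by
    unfold cfStep; linarith [inv_nonneg.2 (zero_le_one.trans hn')]
  calc _ ≤ 2 * (1 / 2) ^ ((List.range n).map y).length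
          * |(y n : ℝ) - cfStep (y n) (y (n + 1))| :=
        abs_foldr_cfStep_sub_le _ hl hn hstep
    _ ≤ 2 * (1 / 2) ^ n * 1 := by
        simp only [List.length_map, List.length_range, cfStep, sub_add_cancel_left, abs_neg]
        gcongr
        rw [abs_of_pos (by positivity)]
        exact inv_le_one_of_one_le₀ hn'
    _ = 2 * (1 / 2) ^ n := mul_one _

theorem one_le_cfVal (hy : ∀ i, 0 < y i) : 1 ≤ cfVal y :=
  ge_of_tendsto' (tendsto_cfVal hy) fun n => by
    rw [cfFin_map_range_succ]
    exact one_le_foldr_cfStep (by simp [hy]) (by exact_mod_cast hy n)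

theorem cfVal_pos (hy : ∀ i, 0 < y i) : 0 < cfVal y := zero_lt_one.trans_le (one_le_cfVal hy)

theorem cfVal_prepend (c : ℕ) (hy : ∀ i, 0 < y i) : cfVal (c ◂ y) = c + (cfVal y)⁻¹ := by
  have hpartial : ∀ n, cfFin ((List.range (n + 1 + 1)).map (c ◂ y))
      = c + (cfFin ((List.range (n + 1)).map y))⁻¹ := fun n => by
    rw [List.range_succ_eq_map, List.map_cons, List.map_map, cfFin]; rfl
  have h : Tendsto (fun n => cfFin ((List.range (n + 1 + 1)).map (c ◂ y))) atTop
      (𝓝 (c + (cfVal y)⁻¹)) := by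
    simp only [hpartial]
    exact ((tendsto_cfVal hy).inv₀ (cfVal_pos hy).ne').const_add _
  exact ((tendsto_add_atTop_iff_nat 1).1 h).limUnder_eq

theorem cfVal_eq_head_add_inv (hy : ∀ i, 0 < y i) :
    cfVal y = y 0 + (cfVal fun i => y (i + 1))⁻¹ := by
  conv_lhs => rw [show y = y 0 ◂ fun i => y (i + 1) by funext i; cases i <;> rfl]
  exact cfVal_prepend _ fun i => hy (i + 1)

theorem head_lt_cfVal (hy : ∀ i, 0 < y i) : (y 0 : ℝ) < cfVal y := by
  rw [cfVal_eq_head_add_inv hy]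
  linarith [inv_pos.2 (cfVal_pos fun i => hy (i + 1))]

theorem cfVal_le_head_add_one (hy : ∀ i, 0 < y i) : cfVal y ≤ y 0 + 1 := by
  rw [cfVal_eq_head_add_inv hy]
  linarith [inv_le_one_of_one_le₀ (one_le_cfVal fun i => hy (i + 1))]

end ContinuedFraction

theorem cfVal_prepend_le_iff {u w : ℕ → ℕ} (c : ℕ) (hu : ∀ i, 0 < u i)
    (hw : ∀ i, 0 < w i) : cfVal (c ◂ u) ≤ cfVal (c ◂ w) ↔ cfVal w ≤ cfVal u := by
  rw [cfVal_prepend c hu, cfVal_prepend c hw, add_le_add_iff_left,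
    inv_le_inv₀ (cfVal_pos hu) (cfVal_pos hw)]

theorem cfVal_prepend_prepend_le_iff {u w : ℕ → ℕ} (c d : ℕ) (hu : ∀ i, 0 < u i)
    (hw : ∀ i, 0 < w i) (hd : 0 < d) :
    cfVal (c ◂ d ◂ u) ≤ cfVal (c ◂ d ◂ w) ↔ cfVal u ≤ cfVal w := by
  rw [cfVal_prepend_le_iff _ (pos_prepend hd hu) (pos_prepend hd hw),
    cfVal_prepend_le_iff _ hw hu]

/-- The alternating lexicographic order; it orders continued fractions by value. -/
def AltLt (u w : ℕ → ℕ) : Prop :=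
  ∃ k, (∀ j < k, u j = w j) ∧ (Even k ∧ u k < w k ∨ Odd k ∧ w k < u k)

theorem cfVal_lt_of_altLt {u w : ℕ → ℕ} (hu : ∀ i, 0 < u i) (hw : ∀ i, 0 < w i)
    (h : AltLt u w) : cfVal u < cfVal w := by
  obtain ⟨k, hagree, hk⟩ := h
  induction k generalizing u w with
  | zero =>
    rcases hk with ⟨-, hlt⟩ | ⟨hodd, -⟩
    · calc cfVal u ≤ u 0 + 1 := cfVal_le_head_add_one hu
        _ ≤ w 0 := by exact_mod_cast hlt
        _ < cfVal w := head_lt_cfVal hw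
    · exact absurd hodd Nat.not_odd_zero
  | succ k ih =>
    have htail := ih (fun i => hw (i + 1)) (fun i => hu (i + 1))
      (fun j hj => (hagree (j + 1) (by omega)).symm)
      (by rcases hk with ⟨he, hlt⟩ | ⟨ho, hlt⟩
          · exact Or.inr ⟨Nat.not_even_iff_odd.1 (Nat.even_add_one.1 he), hlt⟩
          · exact Or.inl ⟨Nat.not_odd_iff_even.1 (Nat.odd_add_one.1 ho), hlt⟩)
    rw [cfVal_eq_head_add_inv hu, cfVal_eq_head_add_inv hw, hagree 0 k.succ_pos]
    gcongr ?_ + ?_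
    exact (inv_lt_inv₀ (cfVal_pos fun i => hu (i + 1)) (cfVal_pos fun i => hw (i + 1))).2 htail

/-- `hpar` says that a first difference at position `m` would put `w` below `u`. -/
theorem exists_prefix_of_not_altLt {u w : ℕ → ℕ} {c c' m : ℕ} (hcc' : c ≠ c')
    (hpar : Even m ↔ c' < c) (hu : ∀ j, u j = c ∨ u j = c') (hw : ∀ j < m, w j = c)
    (hwm : w m = c') (h : ¬ AltLt w u) :
    ∃ e ≤ m, (Even e ↔ Even m) ∧ (∀ j < e, u j = c) ∧ u e = c' := by
  classical
  have hex : ∃ e, u e = c' ∨ e = m := ⟨m, Or.inr rfl⟩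
  have hem : Nat.find hex ≤ m := Nat.find_min' hex (Or.inr rfl)
  have hpre : ∀ j < Nat.find hex, u j = c := fun j hj =>
    (hu j).resolve_right fun h' => Nat.find_min hex hj (Or.inl h')
  have hagree : ∀ j < Nat.find hex, w j = u j := fun j hj =>
    (hw j (by omega)).trans (hpre j hj).symm
  rcases hu (Nat.find hex) with hue | hue
  · have he : Nat.find hex = m := (Nat.find_spec hex).resolve_left (by rw [hue]; exact hcc')
    refine absurd ⟨Nat.find hex, hagree, ?_⟩ h
    rw [hue, he, hwm, ← Nat.not_even_iff_odd]
    rcases hcc'.lt_or_gt with hlt | hlt <;> tauto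
  · refine ⟨Nat.find hex, hem, ?_, hpre, hue⟩
    by_contra hne
    have hlt : Nat.find hex < m := lt_of_le_of_ne hem fun he => hne (by rw [he])
    refine h ⟨Nat.find hex, hagree, ?_⟩
    rw [hue, hw _ hlt, ← Nat.not_even_iff_odd]
    rcases hcc'.lt_or_gt with hlt | hlt <;> tauto

def fwd (x : ℤ → ℕ) (n : ℤ) : ℕ → ℕ := fun j => x (n + j)

def bwd (x : ℤ → ℕ) (n : ℤ) : ℕ → ℕ := fun j => x (n - 1 - j)

section Height
variable {x : ℤ → ℕ}

theorem fwd_eq_prepend (x : ℤ → ℕ) (n : ℤ) : fwd x n = x n ◂ fwd x (n + 1) := by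
  funext j
  cases j with
  | zero => simp [fwd, prepend]
  | succ j => simp only [fwd, prepend]; congr 1; push_cast; ring

theorem bwd_add_one (x : ℤ → ℕ) (n : ℤ) : bwd x (n + 1) = x n ◂ bwd x n := by
  funext j
  cases j with
  | zero => simp [bwd, prepend]
  | succ j => simp only [bwd, prepend]; congr 1; push_cast; ring

theorem fwd_zero (x : ℤ → ℕ) (n : ℤ) : fwd x n 0 = x n := by simp [fwd]

theorem bwd_zero (x : ℤ → ℕ) (n : ℤ) : bwd x n 0 = x (n - 1) := by simp [bwd]

theorem bwd_add_self (x : ℤ → ℕ) (n : ℤ) (m : ℕ) : bwd x (n + m) m = x (n - 1) := by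
  simp only [bwd]; ring_nf

theorem fwd_pos (hx : ∀ i, 0 < x i) (n : ℤ) : ∀ j, 0 < fwd x n j := fun _ => hx _

theorem bwd_pos (hx : ∀ i, 0 < x i) (n : ℤ) : ∀ j, 0 < bwd x n j := fun _ => hx _

theorem lamZ_shiftZ (x : ℤ → ℕ) (n : ℤ) :
    lamZ (shiftZ x n) = cfVal (fwd x n) + (cfVal (bwd x n))⁻¹ := by
  have hf : (fun j : ℕ => shiftZ x n j) = fwd x n := by funext j; simp [shiftZ, fwd, add_comm]
  have hb : (fun j : ℕ => shiftZ x n (-1 - j)) = bwd x n := by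
    funext j; simp only [shiftZ, bwd]; ring_nf
  rw [lamZ, hf, hb]

theorem lamZ_shiftZ_eq_bwd (hx : ∀ i, 0 < x i) (n : ℤ) :
    lamZ (shiftZ x n) = cfVal (bwd x (n + 1)) + (cfVal (fwd x (n + 1)))⁻¹ := by
  rw [lamZ_shiftZ, fwd_eq_prepend, bwd_add_one, cfVal_prepend _ (fwd_pos hx _),
    cfVal_prepend _ (bwd_pos hx _)]
  ring

theorem mVal_le_three_iff (x : ℤ → ℕ) : mVal x ≤ 3 ↔ ∀ n, lamZ (shiftZ x n) ≤ 3 := by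
  simp only [mVal, iSup_le_iff]
  exact forall_congr' fun _ => EReal.coe_le_coe_iff (y := 3)

theorem forall_lamZ_shiftZ_shiftZ_le_iff (x : ℤ → ℕ) (k : ℤ) (r : ℝ) :
    (∀ n, lamZ (shiftZ (shiftZ x k) n) ≤ r) ↔ ∀ n, lamZ (shiftZ x n) ≤ r := by
  have h : ∀ n, shiftZ (shiftZ x k) n = shiftZ x (n + k) := fun n => by
    funext i; simp only [shiftZ, add_assoc]
  simp only [h]
  exact ⟨fun hk n => by simpa using hk (n - k), fun h n => h (n + k)⟩

end Height

theorem add_inv_le_iff_of_add_inv_eq {a b q r : ℝ} (hb : 0 < b) (hq : 0 < q)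
    (h : a + q⁻¹ = r) :
    a + b⁻¹ ≤ r ↔ q ≤ b := by
  rw [← h, add_le_add_iff_left, inv_le_inv₀ hb hq]

theorem cfVal_le_three {y : ℕ → ℕ} (hy : ∀ i, 0 < y i) (hy2 : ∀ i, y i ≤ 2) :
    cfVal y ≤ 3 := by
  have : (y 0 : ℝ) ≤ 2 := by exact_mod_cast hy2 0
  linarith [cfVal_le_head_add_one hy]

section Complement
variable {t : ℕ → ℕ} (ht : ∀ i, 0 < t i)
include ht

theorem cfVal_two_two_add_inv : cfVal (2 ◂ 2 ◂ t) + (cfVal (1 ◂ 1 ◂ t))⁻¹ = 3 := by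
  have hs := one_le_cfVal ht
  rw [cfVal_prepend _ (pos_prepend two_pos ht), cfVal_prepend _ ht,
    cfVal_prepend _ (pos_prepend one_pos ht), cfVal_prepend _ ht]
  field_simp
  ring

theorem cfVal_two_one_one_add_inv : cfVal (2 ◂ 1 ◂ 1 ◂ t) + (cfVal (2 ◂ t))⁻¹ = 3 := by
  have hs := one_le_cfVal ht
  rw [cfVal_prepend _ (pos_prepend one_pos (pos_prepend one_pos ht)),
    cfVal_prepend _ (pos_prepend one_pos ht), cfVal_prepend _ ht, cfVal_prepend _ ht]
  field_simp
  ring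

end Complement

section Local
variable {x : ℤ → ℕ} {n : ℤ} (hx : ∀ i, 0 < x i)
include hx

theorem lamZ_shiftZ_le_three_iff_of_two_two (h0 : x n = 2) (h1 : x (n + 1) = 2) :
    lamZ (shiftZ x n) ≤ 3 ↔ cfVal (1 ◂ 1 ◂ fwd x (n + 2)) ≤ cfVal (bwd x n) := by
  rw [lamZ_shiftZ, fwd_eq_prepend x n, fwd_eq_prepend x (n + 1), h0, h1,
    show n + 1 + 1 = n + 2 by ring]
  exact add_inv_le_iff_of_add_inv_eq (cfVal_pos (bwd_pos hx n))
    (cfVal_pos (pos_prepend one_pos (pos_prepend one_pos (fwd_pos hx _))))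
    (cfVal_two_two_add_inv (fwd_pos hx _))

theorem lamZ_shiftZ_add_one_le_three_iff_of_two_two (h0 : x n = 2) (h1 : x (n + 1) = 2) :
    lamZ (shiftZ x (n + 1)) ≤ 3 ↔ cfVal (1 ◂ 1 ◂ bwd x n) ≤ cfVal (fwd x (n + 2)) := by
  rw [lamZ_shiftZ_eq_bwd hx, bwd_add_one x (n + 1), bwd_add_one x n, h0, h1,
    show n + 1 + 1 = n + 2 by ring]
  exact add_inv_le_iff_of_add_inv_eq (cfVal_pos (fwd_pos hx _))
    (cfVal_pos (pos_prepend one_pos (pos_prepend one_pos (bwd_pos hx _))))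
    (cfVal_two_two_add_inv (bwd_pos hx _))

theorem lamZ_shiftZ_le_three_iff_of_two_one_one (h0 : x n = 2) (h1 : x (n + 1) = 1)
    (h2 : x (n + 2) = 1) :
    lamZ (shiftZ x n) ≤ 3 ↔ cfVal (2 ◂ fwd x (n + 3)) ≤ cfVal (bwd x n) := by
  rw [lamZ_shiftZ, fwd_eq_prepend x n, fwd_eq_prepend x (n + 1), fwd_eq_prepend x (n + 1 + 1),
    show n + 1 + 1 = n + 2 by ring, show n + 2 + 1 = n + 3 by ring, h0, h1, h2]
  exact add_inv_le_iff_of_add_inv_eq (cfVal_pos (bwd_pos hx n))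
    (cfVal_pos (pos_prepend two_pos (fwd_pos hx _))) (cfVal_two_one_one_add_inv (fwd_pos hx _))

theorem lamZ_shiftZ_add_two_le_three_iff_of_one_one_two (h0 : x n = 1) (h1 : x (n + 1) = 1)
    (h2 : x (n + 2) = 2) :
    lamZ (shiftZ x (n + 2)) ≤ 3 ↔ cfVal (2 ◂ bwd x n) ≤ cfVal (fwd x (n + 3)) := by
  rw [lamZ_shiftZ_eq_bwd hx, show n + 2 + 1 = n + 1 + 1 + 1 by ring, bwd_add_one x (n + 1 + 1),
    bwd_add_one x (n + 1), bwd_add_one x n, show n + 1 + 1 = n + 2 by ring, h0, h1, h2,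
    show n + 2 + 1 = n + 3 by ring]
  exact add_inv_le_iff_of_add_inv_eq (cfVal_pos (fwd_pos hx _))
    (cfVal_pos (pos_prepend two_pos (bwd_pos hx _))) (cfVal_two_one_one_add_inv (bwd_pos hx _))

theorem lamZ_shiftZ_le_three_of_eq_one (h : x n = 1) : lamZ (shiftZ x n) ≤ 3 := by
  have hf := cfVal_le_head_add_one (fwd_pos hx n)
  rw [fwd_zero, h] at hf
  have hb := inv_le_one_of_one_le₀ (one_le_cfVal (bwd_pos hx n))
  rw [lamZ_shiftZ]
  push_cast at hf
  linarith

theorem lamZ_shiftZ_le_three_of_two_two_two (hm : x (n - 1) = 2) (h0 : x n = 2)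
    (h1 : x (n + 1) = 2) : lamZ (shiftZ x n) ≤ 3 := by
  have hf := head_lt_cfVal (fwd_pos hx (n + 1))
  have hb := head_lt_cfVal (bwd_pos hx n)
  rw [fwd_zero, h1] at hf
  rw [bwd_zero, hm] at hb
  push_cast at hf hb
  have hf' := inv_anti₀ two_pos hf.le
  have hb' := inv_anti₀ two_pos hb.le
  rw [lamZ_shiftZ, fwd_eq_prepend, cfVal_prepend _ (fwd_pos hx _), h0]
  push_cast
  linarith

theorem three_lt_lamZ_shiftZ_of_three_le (h : 3 ≤ x n) : 3 < lamZ (shiftZ x n) := by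
  have hf := head_lt_cfVal (fwd_pos hx n)
  rw [fwd_zero] at hf
  have h3 : (3 : ℝ) ≤ x n := by exact_mod_cast h
  rw [lamZ_shiftZ]
  linarith [inv_pos.2 (cfVal_pos (bwd_pos hx n))]

theorem three_lt_lamZ_shiftZ_of_two_one_two (hx2 : ∀ i, x i ≤ 2) (h0 : x n = 2)
    (h1 : x (n + 1) = 1) (h2 : x (n + 2) = 2) : 3 < lamZ (shiftZ x n) := by
  have ht := cfVal_le_three (fwd_pos hx (n + 3)) fun _ => hx2 _
  have ht1 := one_le_cfVal (fwd_pos hx (n + 3))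
  have hs := inv_anti₀ (cfVal_pos (bwd_pos hx n)) (cfVal_le_three (bwd_pos hx n) fun _ => hx2 _)
  rw [lamZ_shiftZ, fwd_eq_prepend x n, fwd_eq_prepend x (n + 1), fwd_eq_prepend x (n + 1 + 1),
    show n + 1 + 1 = n + 2 by ring, show n + 2 + 1 = n + 3 by ring, h0, h1, h2,
    cfVal_prepend _ (pos_prepend one_pos (pos_prepend two_pos (fwd_pos hx _))),
    cfVal_prepend _ (pos_prepend two_pos (fwd_pos hx _)), cfVal_prepend _ (fwd_pos hx _)]
  set t := cfVal (fwd x (n + 3))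
  -- `[2; 1, 2, t] = 2 + (2t + 1)/(3t + 1) ≥ 2 + 7/10` for `t ≤ 3`, and `7/10 + 1/3 > 1`
  have ht0 : 0 < t := by linarith
  have key : ((1 : ℕ) + ((2 : ℕ) + t⁻¹)⁻¹ : ℝ)⁻¹ = (2 * t + 1) / (3 * t + 1) := by
    field_simp; ring
  have h710 : (7 / 10 : ℝ) ≤ (2 * t + 1) / (3 * t + 1) := by
    rw [le_div_iff₀ (by linarith)]; linarith
  rw [key]
  push_cast
  linarith

end Local

def IsRun (x : ℤ → ℕ) (c : ℕ) (n : ℤ) (ℓ : ℕ) : Prop :=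
  x (n - 1) ≠ c ∧ (∀ i < ℓ, x (n + i) = c) ∧ x (n + ℓ) ≠ c

section Runs
variable {x : ℤ → ℕ}

theorem IsRun.bwd_of_lt {c : ℕ} {n : ℤ} {ℓ m j : ℕ} (hrun : IsRun x c n ℓ)
    (hm : m ≤ ℓ) (hj : j < m) : bwd x (n + m) j = c := by
  show x (n + m - 1 - j) = c
  rw [show n + m - 1 - j = n + ((m - 1 - j : ℕ) : ℤ) by omega]
  exact hrun.2.1 _ (by omega)

theorem IsRun.of_ne_of_ne {p : ℤ} {N : ℕ} (hN : 0 < N) (hp : x p ≠ x (p + 1))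
    (hpN : x (p + N) ≠ x (p + N + 1))
    (hmid : ∀ j : ℕ, 0 < j → j < N → x (p + j) = x (p + j + 1)) :
    IsRun x (x (p + 1)) (p + 1) N := by
  have hconst : ∀ i < N, x (p + 1 + i) = x (p + 1) := by
    intro i
    induction i with
    | zero => simp
    | succ i ih =>
      intro hi
      rw [← ih (by omega), show p + 1 + ((i + 1 : ℕ) : ℤ) = p + ((i + 1 : ℕ) : ℤ) + 1 by
        push_cast; ring, show p + 1 + (i : ℤ) = p + ((i + 1 : ℕ) : ℤ) by push_cast; ring]
      exact (hmid (i + 1) (by omega) (by omega)).symm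
  refine ⟨by rwa [add_sub_cancel_right], hconst, ?_⟩
  have hlast := hconst (N - 1) (by omega)
  rw [show p + 1 + ((N - 1 : ℕ) : ℤ) = p + N by omega] at hlast
  rwa [show p + 1 + (N : ℤ) = p + N + 1 by ring, ← hlast, ne_comm]

variable (hruns : ∀ c n ℓ, IsRun x c n ℓ → Even ℓ)
include hruns

theorem even_of_runs_even (N : ℕ) :
    ∀ p, x p ≠ x (p + 1) → x (p + N) ≠ x (p + N + 1) → Even N := by
  induction N using Nat.strong_induction_on with
  | _ N ih =>
    intro p hp hN
    by_cases hmid : ∃ j : ℕ, 0 < j ∧ j < N ∧ x (p + j) ≠ x (p + j + 1)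
    · obtain ⟨j, hj0, hjN, hj⟩ := hmid
      have hrest := ih (N - j) (by omega) (p + j) hj
        (by rwa [show p + j + ((N - j : ℕ) : ℤ) = p + N by omega])
      simpa [Nat.add_sub_cancel' hjN.le] using (ih j hjN p hp hj).add hrest
    · push Not at hmid
      rcases N.eq_zero_or_pos with rfl | hN0
      · exact Even.zero
      exact hruns _ _ _ (IsRun.of_ne_of_ne hN0 hp hN hmid)

theorem even_sub_of_runs_even {p q : ℤ} (hp : x p ≠ x (p + 1)) (hq : x q ≠ x (q + 1)) :
    Even (q - p) := by
  wlog h : p ≤ q generalizing p q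
  · exact even_neg.1 (by rw [neg_sub]; exact this hq hp (le_of_not_ge h))
  obtain ⟨N, rfl⟩ : ∃ N : ℕ, q = p + N := ⟨(q - p).toNat, by omega⟩
  simpa using (Int.even_coe_nat N).2 (even_of_runs_even hruns N p hp hq)

theorem exists_pairing_of_runs_even : ∃ k, ∀ i, x (2 * i + k) = x (2 * i + 1 + k) := by
  by_cases hB : ∃ p, x p ≠ x (p + 1)
  · obtain ⟨p, hp⟩ := hB
    refine ⟨p + 1, fun i => not_not.1 fun hne => Int.not_even_two_mul_add_one i ?_⟩
    have := even_sub_of_runs_even hruns hp (q := 2 * i + (p + 1))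
      (by rwa [show 2 * i + (p + 1) + 1 = 2 * i + 1 + (p + 1) by ring])
    rwa [show 2 * i + (p + 1) - p = 2 * i + 1 by ring] at this
  · push Not at hB
    exact ⟨0, fun i => by simpa using hB (2 * i)⟩

end Runs

theorem pos_of_digits {x : ℤ → ℕ} (hd : ∀ i, x i = 1 ∨ x i = 2) : ∀ i, 0 < x i :=
  fun i => by rcases hd i with h | h <;> omega

section Descent
variable {x : ℤ → ℕ} (hd : ∀ i, x i = 1 ∨ x i = 2) (hC : ∀ n, lamZ (shiftZ x n) ≤ 3)
include hd hC

theorem eq_one_of_two_one {n : ℤ} (h0 : x n = 2) (h1 : x (n + 1) = 1) : x (n + 2) = 1 :=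
  (hd _).resolve_right fun h2 => (hC n).not_gt <|
    three_lt_lamZ_shiftZ_of_two_one_two (pos_of_digits hd)
      (fun i => by rcases hd i with h | h <;> omega) h0 h1 h2

/-- The `2 1 1` criterion at the last `2` of the run compares the run, read backwards, with
what follows the `1 1`. -/
theorem IsRun.descent_two {n : ℤ} {ℓ : ℕ} (hrun : IsRun x 2 n ℓ) (hℓ : Odd ℓ) :
    ∃ d < ℓ, Odd d ∧ ∃ n', IsRun x 2 n' d := by
  have hx := pos_of_digits hd
  have hℓ0 := hℓ.pos
  set M := n + ((ℓ - 1 : ℕ) : ℤ) with hM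
  have hM0 : x M = 2 := hrun.2.1 _ (by omega)
  have hM1 : x (M + 1) = 1 :=
    (hd _).resolve_right (by rw [show M + 1 = n + ℓ by omega]; exact hrun.2.2)
  have hM2 := eq_one_of_two_one hd hC hM0 hM1
  have key := (lamZ_shiftZ_le_three_iff_of_two_one_one hx hM0 hM1 hM2).1 (hC M)
  obtain ⟨e, heℓ, hpar, hpre, he⟩ := exists_prefix_of_not_altLt (c := 2) (c' := 1)
    (u := 2 ◂ fwd x (M + 3)) (by norm_num)
    (iff_of_true (Nat.Odd.sub_odd hℓ odd_one) (by norm_num))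
    (fun | 0 => Or.inl rfl | j + 1 => (hd _).symm) (fun j hj => hrun.bwd_of_lt (by omega) hj)
    (by rw [bwd_add_self]; exact (hd _).resolve_right hrun.1)
    fun h => (cfVal_lt_of_altLt (bwd_pos hx M) (pos_prepend two_pos (fwd_pos hx _)) h).not_ge key
  obtain ⟨d, rfl⟩ : ∃ d, e = d + 1 :=
    Nat.exists_eq_succ_of_ne_zero (by rintro rfl; exact (by decide : (2 : ℕ) ≠ 1) he)
  refine ⟨d, by omega,
    Nat.not_even_iff_odd.1 (Nat.even_add_one.1 (hpar.2 (Nat.Odd.sub_odd hℓ odd_one))),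
    M + 3, by rw [show M + 3 - 1 = M + 2 by ring, hM2]; decide, fun i hi => hpre (i + 1) (by omega),
    by rw [show x (M + 3 + d) = 1 from he]; decide⟩

/-- The `1 1 2` criterion at the first `2` after the run compares the run, read backwards,
with what follows the `2 2`. -/
theorem IsRun.descent_one (hno : ∀ n, ¬ IsRun x 2 n 1) {n : ℤ} {ℓ : ℕ}
    (hrun : IsRun x 1 n ℓ) (hℓ : Odd ℓ) : ∃ d < ℓ, Odd d ∧ ∃ n', IsRun x 1 n' d := by
  have hx := pos_of_digits hd
  have hpre2 : x (n - 1) = 2 := (hd _).resolve_left hrun.1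
  obtain rfl | hℓ3 : ℓ = 1 ∨ 3 ≤ ℓ := by obtain ⟨r, rfl⟩ := hℓ; omega
  · have h1 := eq_one_of_two_one hd hC hpre2 (by simpa using hrun.2.1 0 one_pos)
    exact absurd (by rwa [show n - 1 + 2 = n + ((1 : ℕ) : ℤ) by push_cast; ring] at h1) hrun.2.2
  set P := n + ((ℓ - 2 : ℕ) : ℤ) with hP
  have hP0 : x P = 1 := hrun.2.1 _ (by omega)
  have hP1 : x (P + 1) = 1 := by
    rw [show P + 1 = n + ((ℓ - 1 : ℕ) : ℤ) by omega]; exact hrun.2.1 _ (by omega)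
  have hP2 : x (P + 2) = 2 :=
    (hd _).resolve_left (by rw [show P + 2 = n + ℓ by omega]; exact hrun.2.2)
  have hP3 : x (P + 3) = 2 := (hd _).resolve_left fun h3 =>
    hno (P + 2) ⟨by rw [show P + 2 - 1 = P + 1 by ring, hP1]; decide,
      fun i hi => by obtain rfl : i = 0 := by omega
                     simpa using hP2,
      by rw [show P + 2 + ((1 : ℕ) : ℤ) = P + 3 by push_cast; ring, h3]; decide⟩
  have key := (lamZ_shiftZ_add_two_le_three_iff_of_one_one_two hx hP0 hP1 hP2).1 (hC (P + 2))
  rw [fwd_eq_prepend, hP3, show P + 3 + 1 = P + 4 by ring,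
    cfVal_prepend_le_iff _ (bwd_pos hx _) (fwd_pos hx _)] at key
  have hodd : Odd (ℓ - 2) := Nat.Odd.sub_even (by omega) hℓ even_two
  obtain ⟨e, heℓ, hpar, hpre, he⟩ := exists_prefix_of_not_altLt (c := 1) (c' := 2)
    (u := fwd x (P + 4)) (by norm_num)
    (iff_of_false (Nat.not_even_iff_odd.2 hodd) (by norm_num)) (fun _ => hd _)
    (fun j hj => hrun.bwd_of_lt (by omega) hj) (by rw [bwd_add_self]; exact hpre2)
    fun h => (cfVal_lt_of_altLt (bwd_pos hx P) (fwd_pos hx _) h).not_ge key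
  refine ⟨e, by omega, Nat.not_even_iff_odd.1 fun he' => Nat.not_even_iff_odd.2 hodd (hpar.1 he'),
    P + 4, by rw [show P + 4 - 1 = P + 3 by ring, hP3]; decide, hpre,
    by rw [show x (P + 4 + e) = 2 from he]; decide⟩

theorem IsRun.even_of_two {n : ℤ} {ℓ : ℕ} (hrun : IsRun x 2 n ℓ) : Even ℓ := by
  induction ℓ using Nat.strong_induction_on generalizing n with
  | _ ℓ ih =>
    by_contra hodd
    obtain ⟨d, hdℓ, hdodd, n', hrun'⟩ := hrun.descent_two hd hC (Nat.not_even_iff_odd.1 hodd)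
    exact Nat.not_even_iff_odd.2 hdodd (ih d hdℓ hrun')

theorem IsRun.even_of_one {n : ℤ} {ℓ : ℕ} (hrun : IsRun x 1 n ℓ) : Even ℓ := by
  induction ℓ using Nat.strong_induction_on generalizing n with
  | _ ℓ ih =>
    by_contra hodd
    obtain ⟨d, hdℓ, hdodd, n', hrun'⟩ := hrun.descent_one hd hC
      (fun m h => Nat.not_even_iff_odd.2 odd_one (h.even_of_two hd hC))
      (Nat.not_even_iff_odd.1 hodd)
    exact Nat.not_even_iff_odd.2 hdodd (ih d hdℓ hrun')

theorem IsRun.even {c : ℕ} {n : ℤ} {ℓ : ℕ} (hrun : IsRun x c n ℓ) : Even ℓ := by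
  rcases ℓ.eq_zero_or_pos with rfl | hℓ
  · exact Even.zero
  have hc : x n = c := by simpa using hrun.2.1 0 hℓ
  rcases hd n with h | h <;> rw [h] at hc <;> subst hc
  · exact hrun.even_of_one hd hC
  · exact hrun.even_of_two hd hC

end Descent

theorem chiVal_pos (c : AB) : 0 < chiVal c := by cases c <;> decide

theorem altLt_chiInf {s t : ℕ → AB} {k : ℕ} (hst : ∀ j < k, s j = t j) (hs : s k = AB.b)
    (ht : t k = AB.a) : AltLt (chiInf s) (chiInf t) :=
  ⟨2 * k, fun j hj => by simp [chiInf, hst (j / 2) (by omega)],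
    Or.inl ⟨even_two_mul k, by simp [chiInf, hs, ht, chiVal]⟩⟩

theorem cfVal_chiInf_le_iff (s t : ℕ → AB) :
    cfVal (chiInf s) ≤ cfVal (chiInf t) ↔ lexLe t s := by
  have hpos : ∀ w : ℕ → AB, ∀ i, 0 < chiInf w i := fun w i => chiVal_pos _
  constructor
  · intro h
    by_contra hlex
    classical
    have hex : ∃ k, s k ≠ t k := Function.ne_iff.1 fun hst => hlex (Or.inl hst.symm)
    have hagree : ∀ j < Nat.find hex, s j = t j := fun j hj => not_not.1 (Nat.find_min hex hj)
    have hk := Nat.find_spec hex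
    cases hs : s (Nat.find hex) <;> cases ht : t (Nat.find hex) <;> rw [hs, ht] at hk
    · exact hk rfl
    · exact h.not_gt (cfVal_lt_of_altLt (hpos t) (hpos s)
        (altLt_chiInf (fun j hj => (hagree j hj).symm) ht hs))
    · exact hlex (Or.inr ⟨_, fun j hj => (hagree j hj).symm, ht, hs⟩)
    · exact hk rfl
  · rintro (rfl | ⟨k, hts, hta, hsb⟩)
    · exact le_rfl
    · exact (cfVal_lt_of_altLt (hpos s) (hpos t)
        (altLt_chiInf (fun j hj => (hts j hj).symm) hsb hta)).le

def IsChiImage (y : ℤ → ℕ) (v : ℤ → AB) : Prop :=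
  ∀ i, y (2 * i) = chiVal (v i) ∧ y (2 * i + 1) = chiVal (v i)

def LexCondition (v : ℤ → AB) : Prop :=
  ∀ i : ℤ,
    (v i = AB.b ∧ v (i + 1) = AB.a →
      lexLe (fun j : ℕ => v (i - 1 - (j : ℤ))) (fun j : ℕ => v (i + 2 + (j : ℤ)))) ∧
    (v i = AB.a ∧ v (i + 1) = AB.b →
      lexLe (fun j : ℕ => v (i + 2 + (j : ℤ))) (fun j : ℕ => v (i - 1 - (j : ℤ))))

theorem exists_isChiImage_shiftZ {x : ℤ → ℕ} (hd : ∀ i, x i = 1 ∨ x i = 2) {k : ℤ}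
    (hk : ∀ i, x (2 * i + k) = x (2 * i + 1 + k)) : ∃ v, IsChiImage (shiftZ x k) v :=
  ⟨fun i => if x (2 * i + k) = 1 then AB.b else AB.a, fun i => by
    simp only [shiftZ, ← hk i, and_self]
    rcases hd (2 * i + k) with h | h <;> simp [h, chiVal]⟩

namespace IsChiImage
variable {y : ℤ → ℕ} {v : ℤ → AB} (hv : IsChiImage y v)
include hv

theorem pos : ∀ i, 0 < y i := fun i => by
  obtain ⟨m, rfl | rfl⟩ := Int.even_or_odd' i
  · rw [(hv m).1]; exact chiVal_pos _
  · rw [(hv m).2]; exact chiVal_pos _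

theorem fwd_two_mul (m : ℤ) : fwd y (2 * m) = chiInf fun j => v (m + j) := by
  funext j
  obtain ⟨q, rfl | rfl⟩ := Nat.even_or_odd' j
  · show y (2 * m + ((2 * q : ℕ) : ℤ)) = chiVal (v (m + ((2 * q / 2 : ℕ) : ℤ)))
    rw [show 2 * m + ((2 * q : ℕ) : ℤ) = 2 * (m + q) by push_cast; ring, (hv _).1]
    congr 3; omega
  · show y (2 * m + ((2 * q + 1 : ℕ) : ℤ)) = chiVal (v (m + (((2 * q + 1) / 2 : ℕ) : ℤ)))
    rw [show 2 * m + ((2 * q + 1 : ℕ) : ℤ) = 2 * (m + q) + 1 by push_cast; ring, (hv _).2]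
    congr 3; omega

theorem bwd_two_mul (m : ℤ) : bwd y (2 * m) = chiInf fun j => v (m - 1 - j) := by
  funext j
  obtain ⟨q, rfl | rfl⟩ := Nat.even_or_odd' j
  · show y (2 * m - 1 - ((2 * q : ℕ) : ℤ)) = chiVal (v (m - 1 - ((2 * q / 2 : ℕ) : ℤ)))
    rw [show 2 * m - 1 - ((2 * q : ℕ) : ℤ) = 2 * (m - 1 - q) + 1 by push_cast; ring, (hv _).2]
    congr 3; omega
  · show y (2 * m - 1 - ((2 * q + 1 : ℕ) : ℤ))
      = chiVal (v (m - 1 - (((2 * q + 1) / 2 : ℕ) : ℤ)))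
    rw [show 2 * m - 1 - ((2 * q + 1 : ℕ) : ℤ) = 2 * (m - 1 - q) by push_cast; ring, (hv _).1]
    congr 3; omega

theorem lamZ_le_three_iff_of_b_a {i : ℤ} (hb : v i = AB.b) (ha : v (i + 1) = AB.a) :
    lamZ (shiftZ y (2 * i + 2)) ≤ 3 ↔
      lexLe (fun j : ℕ => v (i - 1 - (j : ℤ))) (fun j : ℕ => v (i + 2 + (j : ℤ))) := by
  have h0 : y (2 * i + 2) = 2 := by rw [show 2 * i + 2 = 2 * (i + 1) by ring, (hv _).1, ha]; rfl
  have h1 : y (2 * i + 2 + 1) = 2 := by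
    rw [show 2 * i + 2 + 1 = 2 * (i + 1) + 1 by ring, (hv _).2, ha]; rfl
  have hb2 : bwd y (2 * i + 2) = 1 ◂ 1 ◂ bwd y (2 * i) := by
    rw [show 2 * i + 2 = 2 * i + 1 + 1 by ring, bwd_add_one, bwd_add_one, (hv i).1, (hv i).2, hb]
    rfl
  rw [lamZ_shiftZ_le_three_iff_of_two_two hv.pos h0 h1, hb2,
    cfVal_prepend_prepend_le_iff _ _ (fwd_pos hv.pos _) (bwd_pos hv.pos _) one_pos,
    show 2 * i + 2 + 2 = 2 * (i + 2) by ring, hv.fwd_two_mul, hv.bwd_two_mul, cfVal_chiInf_le_iff]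

theorem lamZ_le_three_iff_of_a_b {i : ℤ} (ha : v i = AB.a) (hb : v (i + 1) = AB.b) :
    lamZ (shiftZ y (2 * i + 1)) ≤ 3 ↔
      lexLe (fun j : ℕ => v (i + 2 + (j : ℤ))) (fun j : ℕ => v (i - 1 - (j : ℤ))) := by
  have h0 : y (2 * i) = 2 := by rw [(hv i).1, ha]; rfl
  have h1 : y (2 * i + 1) = 2 := by rw [(hv i).2, ha]; rfl
  have hf2 : fwd y (2 * i + 2) = 1 ◂ 1 ◂ fwd y (2 * (i + 2)) := by
    rw [fwd_eq_prepend, fwd_eq_prepend y (2 * i + 2 + 1), show 2 * i + 2 = 2 * (i + 1) by ring,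
      (hv _).1, (hv _).2, hb, show 2 * (i + 1) + 1 + 1 = 2 * (i + 2) by ring]
    rfl
  rw [lamZ_shiftZ_add_one_le_three_iff_of_two_two hv.pos h0 h1, hf2,
    cfVal_prepend_prepend_le_iff _ _ (bwd_pos hv.pos _) (fwd_pos hv.pos _) one_pos,
    hv.fwd_two_mul, hv.bwd_two_mul, cfVal_chiInf_le_iff]

theorem forall_lamZ_le_three_iff : (∀ n, lamZ (shiftZ y n) ≤ 3) ↔ LexCondition v := by
  refine ⟨fun hC i => ⟨fun ⟨hb, ha⟩ => (hv.lamZ_le_three_iff_of_b_a hb ha).1 (hC _),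
    fun ⟨ha, hb⟩ => (hv.lamZ_le_three_iff_of_a_b ha hb).1 (hC _)⟩, fun hlex n => ?_⟩
  have hy := hv.pos
  obtain ⟨i, rfl | rfl⟩ := Int.even_or_odd' n
  · cases hvi : v i
    · cases hvm : v (i - 1)
      · refine lamZ_shiftZ_le_three_of_two_two_two hy ?_ (by rw [(hv i).1, hvi]; rfl)
          (by rw [(hv i).2, hvi]; rfl)
        rw [show 2 * i - 1 = 2 * (i - 1) + 1 by ring, (hv _).2, hvm]; rfl
      · have ha : v (i - 1 + 1) = AB.a := by rwa [sub_add_cancel]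
        have := (hv.lamZ_le_three_iff_of_b_a hvm ha).2 ((hlex (i - 1)).1 ⟨hvm, ha⟩)
        rwa [show 2 * (i - 1) + 2 = 2 * i by ring] at this
    · exact lamZ_shiftZ_le_three_of_eq_one hy (by rw [(hv i).1, hvi]; rfl)
  · cases hvi : v i
    · cases hvp : v (i + 1)
      · refine lamZ_shiftZ_le_three_of_two_two_two hy
          (by rw [add_sub_cancel_right, (hv i).1, hvi]; rfl)
          (by rw [(hv i).2, hvi]; rfl) ?_
        rw [show 2 * i + 1 + 1 = 2 * (i + 1) by ring, (hv _).1, hvp]; rfl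
      · exact (hv.lamZ_le_three_iff_of_a_b hvi hvp).2 ((hlex i).2 ⟨hvi, hvp⟩)
    · exact lamZ_shiftZ_le_three_of_eq_one hy (by rw [(hv i).2, hvi]; rfl)

end IsChiImage

theorem statement_3 (x : ℤ → ℕ) (hx : ∀ i, 0 < x i) :
    mVal x ≤ 3 ↔
      ∃ (v : ℤ → AB) (k : ℤ),
        (∀ i : ℤ, x (2 * i + k) = chiVal (v i) ∧ x (2 * i + 1 + k) = chiVal (v i)) ∧
        (∀ i : ℤ,
          (v i = AB.b ∧ v (i + 1) = AB.a →
            lexLe (fun j : ℕ => v (i - 1 - (j : ℤ))) (fun j : ℕ => v (i + 2 + (j : ℤ)))) ∧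
          (v i = AB.a ∧ v (i + 1) = AB.b →
            lexLe (fun j : ℕ => v (i + 2 + (j : ℤ))) (fun j : ℕ => v (i - 1 - (j : ℤ))))) := by
  rw [mVal_le_three_iff]
  constructor
  · intro hC
    have hd : ∀ i, x i = 1 ∨ x i = 2 := fun i => by
      have h3 : ¬ 3 ≤ x i := fun h => (hC i).not_gt (three_lt_lamZ_shiftZ_of_three_le hx h)
      have := hx i
      omega
    obtain ⟨k, hk⟩ := exists_pairing_of_runs_even fun _ _ _ hrun => hrun.even hd hC
    obtain ⟨v, hv⟩ := exists_isChiImage_shiftZ hd hk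
    exact ⟨v, k, hv,
      hv.forall_lamZ_le_three_iff.1 ((forall_lamZ_shiftZ_shiftZ_le_iff x k 3).2 hC)⟩
  · rintro ⟨v, k, hv, hlex⟩
    exact (forall_lamZ_shiftZ_shiftZ_le_iff x k 3).1
      ((IsChiImage.forall_lamZ_le_three_iff (y := shiftZ x k) hv).2 hlex)
end

section
/- Let x̄ be a bi-infinite sequence of positive integers with m(x̄) = 3 and let w = π(x̄). Then for every even position i ≥ 2, the cut of w at position i has value strictly less than 3; in particular all such cuts are good. -/
/-- Value of the cut of the one-sided word `w` at position `i`: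
[wᵢ; wᵢ₊₁, …] + [0; wᵢ₋₁, …, w₀] (the second summand is 0 when i = 0). -/
noncomputable def cutVal (w : ℕ → ℕ) (i : ℕ) : ℝ :=
  cfVal (fun k : ℕ => w (i + k)) + (cfFin (((List.range i).map w).reverse))⁻¹

/-! The cut of `w = π(x)` at `i` and `λ(σⁱ x)` share the forward part `[xᵢ; xᵢ₊₁, …]`; they differ
only in the backward part, which for the cut is the finite continued fraction `[xᵢ₋₁; …, x₀]`, a
convergent of `[xᵢ₋₁; xᵢ₋₂, …]`. For even `i` this convergent has odd index `i - 1`, and odd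
convergents strictly exceed the value of the continued fraction. So the cut is strictly smaller
than `λ(σⁱ x) ≤ m(x) = 3`. -/

open Filter Topology Set

/-- `cfPrefix [c₀, …, cₙ₋₁] z = [c₀; c₁, …, cₙ₋₁, z]`, with the real number `z` as last entry. -/
noncomputable def cfPrefix : List ℕ → ℝ → ℝ
  | [], z => z
  | c :: l, z => (c : ℝ) + (cfPrefix l z)⁻¹

noncomputable def convergent (a : ℕ → ℕ) (n : ℕ) : ℝ := cfFin ((List.range (n + 1)).map a)

@[simp]
lemma cfPrefix_nil (z : ℝ) : cfPrefix [] z = z := rfl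

@[simp]
lemma cfPrefix_cons (c : ℕ) (l : List ℕ) (z : ℝ) :
    cfPrefix (c :: l) z = c + (cfPrefix l z)⁻¹ := rfl

lemma cfFin_append (P Q : List ℕ) : cfFin (P ++ Q) = cfPrefix P (cfFin Q) := by
  induction P with
  | nil => rfl
  | cons c l ih => simp [cfFin, ih]

lemma one_le_cfPrefix {L : List ℕ} (hL : ∀ c ∈ L, 1 ≤ c) {z : ℝ} (hz : 1 ≤ z) :
    1 ≤ cfPrefix L z := by
  induction L with
  | nil => exact hz
  | cons c l ih =>
    have hc : (1 : ℝ) ≤ c := by exact_mod_cast hL c List.mem_cons_self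
    have hl := ih fun d hd => hL d (List.mem_cons_of_mem _ hd)
    rw [cfPrefix_cons]
    linarith [inv_nonneg.2 (zero_le_one.trans hl)]

lemma continuousOn_cfPrefix {L : List ℕ} (hL : ∀ c ∈ L, 1 ≤ c) :
    ContinuousOn (cfPrefix L) (Ici 1) := by
  induction L with
  | nil => exact continuousOn_id
  | cons c l ih =>
    have hl : ∀ d ∈ l, 1 ≤ d := fun d hd => hL d (List.mem_cons_of_mem _ hd)
    exact continuousOn_const.add <| (ih hl).inv₀ fun z hz =>
      (zero_lt_one.trans_le (one_le_cfPrefix hl hz)).ne'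

lemma cfPrefix_strictMonoOn_of_even_strictAntiOn_of_odd {L : List ℕ} (hL : ∀ c ∈ L, 1 ≤ c) :
    (Even L.length → StrictMonoOn (cfPrefix L) (Ici 1)) ∧
      (Odd L.length → StrictAntiOn (cfPrefix L) (Ici 1)) := by
  induction L with
  | nil => exact ⟨fun _ => strictMonoOn_id, fun h => absurd h (by simp)⟩
  | cons c l ih =>
    have hl : ∀ d ∈ l, 1 ≤ d := fun d hd => hL d (List.mem_cons_of_mem _ hd)
    have hpos : ∀ z ∈ Ici (1 : ℝ), 0 < cfPrefix l z := fun z hz =>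
      zero_lt_one.trans_le (one_le_cfPrefix hl hz)
    obtain ⟨ihEven, ihOdd⟩ := ih hl
    simp only [List.length_cons, Nat.even_add_one, Nat.odd_add_one, Nat.not_even_iff_odd,
      Nat.not_odd_iff_even]
    refine ⟨fun h z hz w hw hzw => ?_, fun h z hz w hw hzw => ?_⟩
    · simpa using inv_strictAnti₀ (hpos w hw) (ihOdd h hz hw hzw)
    · simpa using inv_strictAnti₀ (hpos z hz) (ihEven h hz hw hzw)

lemma abs_cfPrefix_cons_sub (c : ℕ) (l : List ℕ) {z w : ℝ} (hz : 0 < cfPrefix l z)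
    (hw : 0 < cfPrefix l w) :
    |cfPrefix (c :: l) z - cfPrefix (c :: l) w| =
      |cfPrefix l z - cfPrefix l w| / (cfPrefix l z * cfPrefix l w) := by
  rw [cfPrefix_cons, cfPrefix_cons, add_sub_add_left_eq_sub, inv_sub_inv hz.ne' hw.ne', abs_div,
    abs_sub_comm, abs_of_pos (mul_pos hz hw)]

/-- Two steps of the continued fraction contract distances by a factor `2`, because
`u * (b + u⁻¹) = b * u + 1 ≥ 2` for `b, u ≥ 1`. -/
lemma abs_cfPrefix_sub_le {L : List ℕ} (hL : ∀ c ∈ L, 1 ≤ c) {z w : ℝ} (hz : 1 ≤ z)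
    (hw : 1 ≤ w) :
    |cfPrefix L z - cfPrefix L w| ≤ (2⁻¹ : ℝ) ^ (L.length / 2) * |z - w| := by
  match L, hL with
  | [], _ => simp
  | [c], _ =>
    rw [abs_cfPrefix_cons_sub c [] (by simpa using zero_lt_one.trans_le hz)
      (by simpa using zero_lt_one.trans_le hw)]
    simpa using div_le_self (abs_nonneg _) (one_le_mul_of_one_le_of_one_le hz hw)
  | a :: b :: l, hL =>
    have hl : ∀ d ∈ l, 1 ≤ d := fun d hd => hL d (by simp [hd])
    have hb : (1 : ℝ) ≤ b := by exact_mod_cast hL b (by simp)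
    have hu := one_le_cfPrefix hl hz
    have hv := one_le_cfPrefix hl hw
    have hu' := one_le_cfPrefix (L := b :: l) (fun d hd => hL d (by simp [hd])) hz
    have hv' := one_le_cfPrefix (L := b :: l) (fun d hd => hL d (by simp [hd])) hw
    have ih := abs_cfPrefix_sub_le hl hz hw
    set u := cfPrefix l z
    set v := cfPrefix l w
    have hbu : 2 ≤ u * cfPrefix (b :: l) z := by
      rw [cfPrefix_cons, mul_add, mul_inv_cancel₀ (by positivity)]; nlinarith
    have hbv : 2 ≤ v * cfPrefix (b :: l) w := by
      rw [cfPrefix_cons, mul_add, mul_inv_cancel₀ (by positivity)]; nlinarith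
    rw [abs_cfPrefix_cons_sub a _ (by positivity) (by positivity),
      abs_cfPrefix_cons_sub b _ (by positivity) (by positivity), div_div,
      show (a :: b :: l).length / 2 = l.length / 2 + 1 by simp; omega, pow_succ]
    calc |u - v| / (u * v * (cfPrefix (b :: l) z * cfPrefix (b :: l) w))
        ≤ |u - v| / 4 := by
          gcongr
          calc (4 : ℝ) = 2 * 2 := by norm_num
            _ ≤ u * cfPrefix (b :: l) z * (v * cfPrefix (b :: l) w) := by gcongr
            _ = _ := by ring
      _ ≤ (2⁻¹ : ℝ) ^ (l.length / 2) * 2⁻¹ * |z - w| := by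
          have : 0 ≤ (2⁻¹ : ℝ) ^ (l.length / 2) * |z - w| := by positivity
          linarith

lemma convergent_zero (a : ℕ → ℕ) : convergent a 0 = a 0 := by
  simp [convergent, cfFin]

lemma convergent_succ (a : ℕ → ℕ) (m : ℕ) :
    convergent a (m + 1) = a 0 + (convergent (fun j => a (j + 1)) m)⁻¹ := by
  rw [convergent, List.range_succ_eq_map, List.map_cons, List.map_map]
  rfl

lemma convergent_add (a : ℕ → ℕ) (n m : ℕ) :
    convergent a (n + m) =
      cfPrefix ((List.range n).map a) (convergent (fun j => a (n + j)) m) := by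
  rw [convergent, Nat.add_assoc, List.range_add, List.map_append, cfFin_append, List.map_map]
  rfl

section convergent

variable {a : ℕ → ℕ}

lemma one_le_convergent (ha : ∀ n, 1 ≤ a n) (m : ℕ) : 1 ≤ convergent a m := by
  induction m generalizing a with
  | zero => simpa [convergent_zero] using ha 0
  | succ m ih =>
    have h0 : (1 : ℝ) ≤ a 0 := by exact_mod_cast ha 0
    have hpos := zero_lt_one.trans_le (ih fun n => ha (n + 1))
    rw [convergent_succ]
    linarith [inv_pos.2 hpos]

lemma convergent_mem_Icc (ha : ∀ n, 1 ≤ a n) (m : ℕ) :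
    convergent a m ∈ Icc (a 0 : ℝ) (a 0 + 1) := by
  cases m with
  | zero => simp [convergent_zero]
  | succ m =>
    have h := one_le_convergent (a := fun j => a (j + 1)) (fun n => ha (n + 1)) m
    rw [convergent_succ]
    exact ⟨by linarith [inv_pos.2 (zero_lt_one.trans_le h)],
      by linarith [inv_le_one_of_one_le₀ h]⟩

lemma abs_convergent_sub_le (ha : ∀ n, 1 ≤ a n) (n k : ℕ) :
    |convergent a (n + k) - convergent a n| ≤ (2⁻¹ : ℝ) ^ (n / 2) := by
  have hP : ∀ c ∈ (List.range n).map a, 1 ≤ c := by simp [ha]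
  have htail : ∀ j, 1 ≤ a (n + j) := fun j => ha _
  have hk := convergent_mem_Icc htail k
  have h0 := convergent_mem_Icc htail 0
  have hn : (1 : ℝ) ≤ a n := by exact_mod_cast ha n
  simp only [add_zero] at hk h0
  rw [convergent_add a n k, ← add_zero n, convergent_add a n 0, add_zero]
  calc _ ≤ (2⁻¹ : ℝ) ^ (n / 2) * |convergent (fun j => a (n + j)) k
          - convergent (fun j => a (n + j)) 0| := by
        simpa using abs_cfPrefix_sub_le hP (by linarith [hk.1]) (by linarith [h0.1])
    _ ≤ (2⁻¹ : ℝ) ^ (n / 2) * 1 := by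
        gcongr
        rw [abs_le]
        constructor <;> linarith [hk.1, hk.2, h0.1, h0.2]
    _ = _ := mul_one _

lemma tendsto_convergent (ha : ∀ n, 1 ≤ a n) :
    Tendsto (convergent a) atTop (𝓝 (cfVal a)) := by
  have hcauchy : CauchySeq (convergent a) := by
    refine cauchySeq_of_le_tendsto_0 (fun N => (2⁻¹ : ℝ) ^ (N / 2)) (fun p q N hp hq => ?_) ?_
    · have key : ∀ {p q}, N ≤ p → p ≤ q → dist (convergent a q) (convergent a p) ≤
          (2⁻¹ : ℝ) ^ (N / 2) := fun {p q} hNp hpq => by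
        obtain ⟨k, rfl⟩ := Nat.exists_eq_add_of_le hpq
        exact (abs_convergent_sub_le ha p k).trans
          (pow_le_pow_of_le_one (by norm_num) (by norm_num) (Nat.div_le_div_right hNp))
      rcases le_total p q with hpq | hqp
      · exact dist_comm (convergent a p) _ ▸ key hp hpq
      · exact key hq hqp
    · exact (tendsto_pow_atTop_nhds_zero_of_lt_one (by norm_num) (by norm_num)).comp
        (Nat.tendsto_div_const_atTop two_ne_zero)
  exact hcauchy.tendsto_limUnder

lemma one_le_cfVal_s5 (ha : ∀ n, 1 ≤ a n) : 1 ≤ cfVal a :=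
  ge_of_tendsto' (tendsto_convergent ha) (one_le_convergent ha)

lemma cfVal_eq_cfPrefix (ha : ∀ n, 1 ≤ a n) (n : ℕ) :
    cfVal a = cfPrefix ((List.range n).map a) (cfVal fun j => a (n + j)) := by
  have htail : ∀ j, 1 ≤ a (n + j) := fun j => ha _
  have hP : ∀ c ∈ (List.range n).map a, 1 ≤ c := by simp [ha]
  have hlim : Tendsto (fun m => convergent a (n + m)) atTop (𝓝 (cfVal a)) :=
    (tendsto_convergent ha).comp (tendsto_add_atTop_nat n |>.congr fun m => add_comm m n)
  simp only [convergent_add] at hlim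
  refine tendsto_nhds_unique hlim ?_
  exact ((continuousOn_cfPrefix hP).continuousWithinAt (one_le_cfVal_s5 htail)).tendsto.comp <|
    tendsto_nhdsWithin_iff.2 ⟨tendsto_convergent htail, .of_forall (one_le_convergent htail)⟩

lemma head_lt_cfVal_s5 (ha : ∀ n, 1 ≤ a n) : (a 0 : ℝ) < cfVal a := by
  have h := one_le_cfVal_s5 (a := fun j => a (1 + j)) fun j => ha _
  rw [cfVal_eq_cfPrefix ha 1]
  simpa using inv_pos.2 (zero_lt_one.trans_le h)

lemma cfVal_lt_convergent_of_odd (ha : ∀ n, 1 ≤ a n) {k : ℕ} (hk : Odd k) :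
    cfVal a < convergent a k := by
  have htail : ∀ j, 1 ≤ a (k + j) := fun j => ha _
  have hP : ∀ c ∈ (List.range k).map a, 1 ≤ c := by simp [ha]
  have hak : (1 : ℝ) ≤ a k := by exact_mod_cast ha k
  rw [cfVal_eq_cfPrefix ha k, ← add_zero k, convergent_add, add_zero, convergent_zero]
  exact (cfPrefix_strictMonoOn_of_even_strictAntiOn_of_odd hP).2 (by simpa using hk) hak
    (hak.trans (head_lt_cfVal_s5 htail).le) (by simpa using head_lt_cfVal_s5 htail)

end convergent

lemma lamZ_shiftZ_le_mVal (x : ℤ → ℕ) (k : ℤ) : (lamZ (shiftZ x k) : EReal) ≤ mVal x :=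
  le_iSup (fun k => (lamZ (shiftZ x k) : EReal)) k

lemma reverse_map_range (w : ℕ → ℕ) (i : ℕ) :
    ((List.range i).map w).reverse = (List.range i).map fun j => w (i - 1 - j) := by
  rw [← List.map_reverse, List.range_eq_range', List.reverse_range', List.map_map,
    ← List.range_eq_range']
  simp [Function.comp_def]

lemma cutVal_lt_lamZ_shiftZ (x : ℤ → ℕ) (hx : ∀ i, 0 < x i) {i : ℕ} (hi : Even i) :
    cutVal (fun n : ℕ => x n) i < lamZ (shiftZ x i) := by
  set b : ℕ → ℕ := fun n => x (i - 1 - n)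
  have hb : ∀ n, 1 ≤ b n := fun n => hx _
  have hforward : (fun k : ℕ => x ↑(i + k)) = fun n : ℕ => shiftZ x i n := by
    funext k; simp [shiftZ, add_comm]
  have hbackward : (fun n : ℕ => shiftZ x i (-1 - n)) = b := by
    funext n; simp only [shiftZ, b]; ring_nf
  have hinv : (cfFin (((List.range i).map fun n : ℕ => x n).reverse))⁻¹ < (cfVal b)⁻¹ := by
    have hpos := zero_lt_one.trans_le (one_le_cfVal_s5 hb)
    obtain rfl | hi0 := eq_or_ne i 0
    · simpa [cfFin] using hpos
    have hconv :
        cfFin (((List.range i).map fun n : ℕ => x n).reverse) = convergent b (i - 1) := by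
      rw [reverse_map_range, convergent, Nat.sub_add_cancel (Nat.pos_of_ne_zero hi0)]
      exact congrArg cfFin <| List.map_congr_left fun j hj =>
        congrArg x (by simp only [List.mem_range] at hj; omega)
    have hodd : Odd (i - 1) := Nat.Even.sub_odd (Nat.one_le_iff_ne_zero.2 hi0) hi odd_one
    rw [hconv]
    exact inv_strictAnti₀ hpos (cfVal_lt_convergent_of_odd hb hodd)
  rw [cutVal, lamZ, hforward, hbackward]
  exact add_lt_add_right hinv _

theorem statement_5 (x : ℤ → ℕ) (hx : ∀ i, 0 < x i) (hm : mVal x = 3) :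
    ∀ i : ℕ, 2 ≤ i → Even i → cutVal (fun n : ℕ => x (n : ℤ)) i < 3 := by
  intro i _ hi
  have hle := lamZ_shiftZ_le_mVal x i
  rw [hm, show (3 : EReal) = (3 : ℝ) by norm_cast, EReal.coe_le_coe_iff] at hle
  exact (cutVal_lt_lamZ_shiftZ x hx hi).trans_le hle
end

section
/- For every pair (α, β) ∈ P̄: α begins with the letter a and β ends with the letter b; moreover αβ = β_a α^b, α^b β = β^T α^b, and α β_a = β_a α^T. Consequently, for every k ≥ 1 the words α^k β and α β^k begin with β_a and end with α^b. -/
/-- P̄ₙ: pairs of words obtained from (a, b) by exactly n applications of the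
operations Ū(α, β) = (αβ, β) and V̄(α, β) = (α, αβ). -/
inductive PbarN : ℕ → List AB → List AB → Prop
  | base : PbarN 0 [AB.a] [AB.b]
  | u {n : ℕ} {α β : List AB} : PbarN n α β → PbarN (n + 1) (α ++ β) β
  | v {n : ℕ} {α β : List AB} : PbarN n α β → PbarN (n + 1) α (α ++ β)

/-- β_a : the word β with its last letter replaced by a. -/
def subA (β : List AB) : List AB := β.dropLast ++ [AB.a]

/-- α^b : the word α with its first letter replaced by b. -/
def supB (α : List AB) : List AB := AB.b :: α.tail

/-- The k-fold concatenation wᵏ. -/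
def npow (w : List AB) (k : ℕ) : List AB := (List.replicate k w).flatten


/-! Since `supB (α ++ β) = supB α ++ β` and `subA (α ++ β) = α ++ subA β` for nonempty words,
each of the identities is carried through `Ū` and `V̄` by rewriting with the identities for
`(α, β)`; this only closes up once the auxiliary identity `α^b β_a = βᵀ αᵀ` is added to the
invariant. The statements about powers then come from conjugation: `x s = s y` gives
`xᵏ s = s yᵏ`, so `αᵏ β = β_a (αᵀ)ᵏ⁻¹ α^b` and `α βᵏ = β_a (βᵀ)ᵏ⁻¹ α^b`. -/

lemma supB_append {α : List AB} (hα : α ≠ []) (β : List AB) : supB (α ++ β) = supB α ++ β := by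
  cases α with
  | nil => exact absurd rfl hα
  | cons x t => simp [supB]

lemma subA_append (α : List AB) {β : List AB} (hβ : β ≠ []) : subA (α ++ β) = α ++ subA β := by
  simp [subA, List.dropLast_append_of_ne_nil hβ]

lemma npow_succ (w : List AB) (k : ℕ) : npow w (k + 1) = w ++ npow w k := by
  simp [npow, List.replicate_succ]

lemma npow_succ' (w : List AB) (k : ℕ) : npow w (k + 1) = npow w k ++ w := by
  simp [npow, List.replicate_succ']

lemma npow_append_of_append_eq {x y s : List AB} (h : x ++ s = s ++ y) (k : ℕ) :
    npow x k ++ s = s ++ npow y k := by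
  induction k with
  | zero => simp [npow]
  | succ k ih =>
    rw [npow_succ, npow_succ, List.append_assoc, ih, ← List.append_assoc, h, List.append_assoc]

structure StandardPairIdentities (α β : List AB) : Prop where
  a_prefix : [AB.a] <+: α
  b_suffix : [AB.b] <:+ β
  append_eq : α ++ β = subA β ++ supB α
  supB_append_eq : supB α ++ β = β.reverse ++ supB α
  append_subA_eq : α ++ subA β = subA β ++ α.reverse
  supB_append_subA_eq : supB α ++ subA β = β.reverse ++ α.reverse

namespace StandardPairIdentities

variable {α β : List AB}

lemma base : StandardPairIdentities [AB.a] [AB.b] :=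
  ⟨⟨[], rfl⟩, ⟨[], rfl⟩, rfl, rfl, rfl, rfl⟩

lemma ne_nil_left (I : StandardPairIdentities α β) : α ≠ [] := by
  rintro rfl
  simpa using I.a_prefix

lemma ne_nil_right (I : StandardPairIdentities α β) : β ≠ [] := by
  rintro rfl
  simpa using I.b_suffix

lemma u (I : StandardPairIdentities α β) : StandardPairIdentities (α ++ β) β := by
  have hs := supB_append I.ne_nil_left β
  refine ⟨I.a_prefix.trans (List.prefix_append _ _), I.b_suffix, ?_, ?_, ?_, ?_⟩
  · rw [hs, ← List.append_assoc, ← I.append_eq]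
  · rw [hs, ← List.append_assoc, ← I.supB_append_eq]
  · rw [List.reverse_append, I.append_eq, List.append_assoc, I.supB_append_subA_eq]
  · rw [hs, List.reverse_append, I.supB_append_eq, List.append_assoc, I.supB_append_subA_eq]

lemma v (I : StandardPairIdentities α β) : StandardPairIdentities α (α ++ β) := by
  have hs := subA_append α I.ne_nil_right
  refine ⟨I.a_prefix, I.b_suffix.trans (List.suffix_append _ _), ?_, ?_, ?_, ?_⟩
  · rw [hs, I.append_eq, List.append_assoc]
  · rw [List.reverse_append, I.append_eq, ← List.append_assoc, I.supB_append_subA_eq]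
  · rw [hs, I.append_subA_eq, ← List.append_assoc, I.append_subA_eq]
  · rw [hs, I.append_subA_eq, ← List.append_assoc, I.supB_append_subA_eq, List.reverse_append]

lemma npow_succ_append (I : StandardPairIdentities α β) (k : ℕ) :
    npow α (k + 1) ++ β = subA β ++ npow α.reverse k ++ supB α := by
  rw [npow_succ', List.append_assoc, I.append_eq, ← List.append_assoc,
    npow_append_of_append_eq I.append_subA_eq]

lemma append_npow_succ (I : StandardPairIdentities α β) (k : ℕ) :
    α ++ npow β (k + 1) = subA β ++ npow β.reverse k ++ supB α := by
  rw [npow_succ, ← List.append_assoc, I.append_eq, List.append_assoc, List.append_assoc,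
    ← npow_append_of_append_eq I.supB_append_eq.symm]

end StandardPairIdentities

lemma PbarN.standardPairIdentities {n : ℕ} {α β : List AB} (h : PbarN n α β) :
    StandardPairIdentities α β := by
  induction h with
  | base => exact .base
  | u _ ih => exact ih.u
  | v _ ih => exact ih.v

theorem statement_8 (α β : List AB) (h : ∃ n : ℕ, PbarN n α β) :
    ([AB.a] <+: α) ∧ ([AB.b] <:+ β) ∧
    α ++ β = subA β ++ supB α ∧
    supB α ++ β = β.reverse ++ supB α ∧
    α ++ subA β = subA β ++ α.reverse ∧
    (∀ k : ℕ, 1 ≤ k →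
      (subA β <+: npow α k ++ β) ∧ (supB α <:+ npow α k ++ β) ∧
      (subA β <+: α ++ npow β k) ∧ (supB α <:+ α ++ npow β k)) := by
  obtain ⟨n, h⟩ := h
  have I := h.standardPairIdentities
  refine ⟨I.a_prefix, I.b_suffix, I.append_eq, I.supB_append_eq, I.append_subA_eq, ?_⟩
  intro k hk
  obtain ⟨j, rfl⟩ := Nat.exists_eq_add_of_le' hk
  rw [I.npow_succ_append, I.append_npow_succ]
  exact ⟨(List.prefix_append _ _).trans (List.prefix_append _ _), List.suffix_append _ _,
    (List.prefix_append _ _).trans (List.prefix_append _ _), List.suffix_append _ _⟩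
end

section
/- Let (α, β) ∈ P̄. If a finite word over {a, b} admits two factorizations γ₁γ₂⋯γₙ = η₁η₂⋯η_m with every γ_i, η_j ∈ {α, β}, then n = m and γ_i = η_i for all 1 ≤ i ≤ n. Likewise, if two infinite concatenations γ₁γ₂⋯ and η₁η₂⋯ with every γ_i, η_j ∈ {α, β} are equal as one-sided infinite words, then γ_i = η_i for all i. -/
/-- The one-sided infinite word γ₁γ₂⋯ obtained by concatenating the (nonempty)
blocks c 0, c 1, c 2, …. -/
def infConcat (c : ℕ → List AB) : ℕ → AB :=
  fun i => ((List.range (i + 1)).flatMap c).getD i AB.a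

/-!
Write σ_{α,β} for the morphism a ↦ α, b ↦ β. Factorizations over {α, β} of a finite or infinite
word are exactly its preimages under σ_{α,β}, so the claim is that σ_{α,β} is injective on finite
and on one-sided infinite words. Since Ū and V̄ turn σ_{α,β} into σ_{α,β} ∘ U and σ_{α,β} ∘ V with
U : a ↦ ab, b ↦ b and V : a ↦ a, b ↦ ab, every σ_{α,β} with (α, β) ∈ P̄ is a composite of U's and
V's. Injectivity on both kinds of words is stable under composition (the image of an infinite
concatenation is the concatenation of the images), and U and V are injective because the first
letter of a word can be read off its image: at position 0 for U, at position 1 for V.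
-/

open Function

def concatStream (c : Stream' (List AB)) : Stream' AB := infConcat c

section concatStream

variable {c : Stream' (List AB)}

lemma length_flatMap_range_ge (hc : ∀ i, c.get i ≠ []) (n : ℕ) :
    n ≤ ((List.range n).flatMap c.get).length := by
  induction n with
  | zero => simp
  | succ n ih =>
    rw [List.range_succ, List.flatMap_append, List.length_append, List.flatMap_singleton]
    have := List.length_pos_iff.mpr (hc n)
    omega

lemma concatStream_get_eq_getD (hc : ∀ i, c.get i ≠ []) {i n : ℕ} (hin : i < n) :
    (concatStream c).get i = ((List.range n).flatMap c.get).getD i AB.a := by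
  obtain ⟨k, rfl⟩ := Nat.exists_eq_add_of_lt hin
  rw [show i + k + 1 = (i + 1) + k by omega, List.range_add (n := i + 1) (m := k),
    List.flatMap_append,
    List.getD_append _ _ _ _ (Nat.lt_of_lt_of_le i.lt_succ_self (length_flatMap_range_ge hc _))]
  rfl

lemma concatStream_eq_append (hc : ∀ i, c.get i ≠ []) :
    concatStream c = c.head ++ₛ concatStream c.tail := by
  ext i
  have hsplit : (List.range (i + 2)).flatMap c.get =
      c.head ++ (List.range (i + 1)).flatMap c.tail.get := by
    rw [List.range_succ_eq_map, List.flatMap_cons, List.flatMap_map]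
    rfl
  rw [concatStream_get_eq_getD hc (show i < i + 2 by omega), hsplit]
  rcases lt_or_ge i c.head.length with hi | hi
  · rw [List.getD_append _ _ _ _ hi, List.getD_eq_getElem _ _ hi, Stream'.get_append_left _ _ _ hi]
  · obtain ⟨j, rfl⟩ := Nat.exists_eq_add_of_le hi
    rw [List.getD_append_right _ _ _ _ hi, Nat.add_sub_cancel_left, Stream'.get_append_right,
      concatStream_get_eq_getD (c := c.tail) (fun i => hc (i + 1))
        (show j < c.head.length + j + 1 by omega)]

lemma concatStream_drop_eq_append (hc : ∀ i, c.get i ≠ []) (n : ℕ) :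
    concatStream (c.drop n) = c.get n ++ₛ concatStream (c.drop (n + 1)) := by
  rw [concatStream_eq_append (c := c.drop n) fun i => hc _, Stream'.head_drop, Stream'.tail_drop']

lemma eq_concatStream (hc : ∀ i, c.get i ≠ []) {t : ℕ → Stream' AB}
    (ht : ∀ n, t n = c.get n ++ₛ t (n + 1)) : t 0 = concatStream c := by
  suffices h : ∀ k n, (t n).get k = (concatStream (c.drop n)).get k by
    ext k; exact h k 0
  intro k
  induction k using Nat.strong_induction_on with
  | _ k ih =>
    intro n
    rw [ht n, concatStream_drop_eq_append hc n]
    rcases lt_or_ge k (c.get n).length with hk | hk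
    · rw [Stream'.get_append_left _ _ _ hk, Stream'.get_append_left _ _ _ hk]
    · obtain ⟨j, rfl⟩ := Nat.exists_eq_add_of_le hk
      have := List.length_pos_iff.mpr (hc n)
      rw [Stream'.get_append_right, Stream'.get_append_right]
      exact ih j (by omega) (n + 1)

end concatStream

section morphisms

variable {σ τ : AB → List AB}

lemma concatStream_map_eq_append (hσ : ∀ l, σ l ≠ []) (x : Stream' AB) :
    concatStream (x.map σ) = σ x.head ++ₛ concatStream (x.tail.map σ) :=
  concatStream_eq_append fun _ => hσ _

lemma concatStream_map_append (hσ : ∀ l, σ l ≠ []) (w : List AB) (x : Stream' AB) :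
    concatStream ((w ++ₛ x).map σ) = w.flatMap σ ++ₛ concatStream (x.map σ) := by
  induction w with
  | nil => rfl
  | cons l w ih =>
    rw [concatStream_map_eq_append hσ, List.flatMap_cons, Stream'.append_append_stream]
    exact congrArg (σ l ++ₛ ·) ih

lemma flatMap_ne_nil (hσ : ∀ l, σ l ≠ []) (hτ : ∀ l, τ l ≠ []) (l : AB) :
    (τ l).flatMap σ ≠ [] := by
  obtain ⟨m, hm⟩ := List.exists_mem_of_ne_nil _ (hτ l)
  simpa [List.flatMap_eq_nil_iff] using ⟨m, hm, hσ m⟩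

lemma concatStream_map_concatStream (hσ : ∀ l, σ l ≠ []) (hτ : ∀ l, τ l ≠ [])
    (x : Stream' AB) :
    concatStream ((concatStream (x.map τ)).map σ) =
      concatStream (x.map fun l => (τ l).flatMap σ) := by
  refine eq_concatStream (t := fun n => concatStream ((concatStream ((x.drop n).map τ)).map σ))
    (fun i => flatMap_ne_nil hσ hτ _) fun n => ?_
  rw [← Stream'.drop_map, concatStream_drop_eq_append (c := x.map τ) (fun i => hτ _) n,
    concatStream_map_append hσ, Stream'.drop_map]
  rfl

end morphisms

def pairMorphism (α β : List AB) : AB → List AB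
  | .a => α
  | .b => β

structure IsOmegaInjective (σ : AB → List AB) : Prop where
  ne_nil : ∀ l, σ l ≠ []
  injective : Injective (List.flatMap σ)
  injective_stream : Injective fun x : Stream' AB => concatStream (x.map σ)

namespace IsOmegaInjective

variable {σ τ : AB → List AB}

lemma comp (hσ : IsOmegaInjective σ) (hτ : IsOmegaInjective τ) :
    IsOmegaInjective fun l => (τ l).flatMap σ where
  ne_nil := flatMap_ne_nil hσ.ne_nil hτ.ne_nil
  injective := by
    have : (List.flatMap fun l => (τ l).flatMap σ) = List.flatMap σ ∘ List.flatMap τ :=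
      funext fun _ => List.flatMap_assoc.symm
    exact this ▸ hσ.injective.comp hτ.injective
  injective_stream := by
    simpa only [comp_def, concatStream_map_concatStream hσ.ne_nil hτ.ne_nil]
      using hσ.injective_stream.comp hτ.injective_stream

lemma of_decode (hne : ∀ l, σ l ≠ [])
    (dec : List AB → AB) (hdec : ∀ l (w : List AB), dec (σ l ++ w.flatMap σ) = l)
    (decₛ : Stream' AB → AB)
    (hdecₛ : ∀ l (x : Stream' AB), decₛ (σ l ++ₛ concatStream (x.map σ)) = l) :
    IsOmegaInjective σ where
  ne_nil := hne
  injective := by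
    intro w v h
    induction w generalizing v with
    | nil =>
      cases v with
      | nil => rfl
      | cons m v => simp [hne] at h
    | cons l w ih =>
      cases v with
      | nil => simp [hne] at h
      | cons m v =>
        rw [List.flatMap_cons, List.flatMap_cons] at h
        obtain rfl : l = m := by rw [← hdec l w, h, hdec]
        rw [ih (List.append_cancel_left h)]
  injective_stream := by
    have hstep : ∀ x y : Stream' AB, concatStream (x.map σ) = concatStream (y.map σ) →
        x.head = y.head ∧ concatStream (x.tail.map σ) = concatStream (y.tail.map σ) := by
      intro x y h
      rw [concatStream_map_eq_append hne x, concatStream_map_eq_append hne y] at h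
      have hhead : x.head = y.head := by rw [← hdecₛ x.head x.tail, h, hdecₛ]
      rw [hhead] at h
      exact ⟨hhead, Stream'.append_right_injective _ _ _ h⟩
    intro x y h
    ext n
    induction n generalizing x y with
    | zero => exact (hstep x y h).1
    | succ n ih => exact ih (hstep x y h).2

end IsOmegaInjective

lemma isOmegaInjective_pairMorphism_a_b : IsOmegaInjective (pairMorphism [.a] [.b]) := by
  have hσ : pairMorphism [.a] [.b] = fun l => [l] := by
    funext l; cases l <;> rfl
  refine .of_decode (by simp [hσ]) (·.getD 0 .a) (fun l w => by simp [hσ]) (·.get 0)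
    fun l x => by simp [hσ]

lemma isOmegaInjective_pairMorphism_ab_b : IsOmegaInjective (pairMorphism [.a, .b] [.b]) := by
  refine .of_decode (fun l => by cases l <;> simp [pairMorphism]) (·.getD 0 .a)
    (fun l w => by cases l <;> rfl) (·.get 0) fun l x => by cases l <;> rfl

-- All images begin with `a`, so position 1 holds `l` (past the end, `getD` returns `a`).
lemma isOmegaInjective_pairMorphism_a_ab : IsOmegaInjective (pairMorphism [.a] [.a, .b]) := by
  have hne : ∀ l, pairMorphism [.a] [.a, .b] l ≠ [] := fun l => by cases l <;> simp [pairMorphism]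
  refine .of_decode hne (·.getD 1 .a) (fun l w => ?_) (·.get 1) fun l x => ?_
  · cases l
    · cases w with
      | nil => rfl
      | cons m w => cases m <;> rfl
    · rfl
  · cases l
    · change (concatStream (x.map _)).get 0 = .a
      rw [concatStream_map_eq_append hne]
      cases x.head <;> rfl
    · rfl

lemma pairMorphism_append_left (α β : List AB) :
    pairMorphism (α ++ β) β =
      fun l => (pairMorphism [.a, .b] [.b] l).flatMap (pairMorphism α β) := by
  funext l; cases l <;> simp [pairMorphism]

lemma pairMorphism_append_right (α β : List AB) :
    pairMorphism α (α ++ β) =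
      fun l => (pairMorphism [.a] [.a, .b] l).flatMap (pairMorphism α β) := by
  funext l; cases l <;> simp [pairMorphism]

theorem PbarN.isOmegaInjective {n : ℕ} {α β : List AB} (h : PbarN n α β) :
    IsOmegaInjective (pairMorphism α β) := by
  induction h with
  | base => exact isOmegaInjective_pairMorphism_a_b
  | u _ ih => rw [pairMorphism_append_left]; exact ih.comp isOmegaInjective_pairMorphism_ab_b
  | v _ ih => rw [pairMorphism_append_right]; exact ih.comp isOmegaInjective_pairMorphism_a_ab

lemma mem_range_pairMorphism {α β w : List AB} (h : w = α ∨ w = β) :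
    w ∈ Set.range (pairMorphism α β) := by
  rcases h with rfl | rfl
  exacts [⟨.a, rfl⟩, ⟨.b, rfl⟩]

theorem statement_9 (α β : List AB) (h : ∃ n : ℕ, PbarN n α β) :
    (∀ γs ηs : List (List AB),
      (∀ w ∈ γs, w = α ∨ w = β) → (∀ w ∈ ηs, w = α ∨ w = β) →
      γs.flatten = ηs.flatten → γs = ηs) ∧
    (∀ c d : ℕ → List AB,
      (∀ i, c i = α ∨ c i = β) → (∀ i, d i = α ∨ d i = β) →
      infConcat c = infConcat d → c = d) := by
  obtain ⟨n, h⟩ := h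
  have hσ := h.isOmegaInjective
  refine ⟨fun γs ηs hγ hη heq => ?_, fun c d hc hd heq => ?_⟩
  · obtain ⟨u, rfl⟩ : γs ∈ Set.range (List.map (pairMorphism α β)) := by
      rw [Set.range_list_map]; exact fun w hw => mem_range_pairMorphism (hγ w hw)
    obtain ⟨v, rfl⟩ : ηs ∈ Set.range (List.map (pairMorphism α β)) := by
      rw [Set.range_list_map]; exact fun w hw => mem_range_pairMorphism (hη w hw)
    have hflat : u.flatMap (pairMorphism α β) = v.flatMap (pairMorphism α β) := by
      simpa only [List.flatMap_def] using heq
    rw [hσ.injective hflat]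
  · choose x hx using fun i => mem_range_pairMorphism (hc i)
    choose y hy using fun i => mem_range_pairMorphism (hd i)
    obtain rfl : c = Stream'.map (pairMorphism α β) x := funext fun i => (hx i).symm
    obtain rfl : d = Stream'.map (pairMorphism α β) y := funext fun i => (hy i).symm
    rw [hσ.injective_stream heq]
end

section
/- For every pair (α, β) ∈ P̄: (i) αβ = aθb for some palindrome θ over {a, b}; (ii) ααββ = a θ̂ a b θ̂ b for some palindrome θ̂ over {a, b}. -/
/-- `x` and `y` stand for the pair `(a :: x, y ++ [b])`. -/
structure PalindromicSplit {σ : Type*} (a b : σ) (x y : List σ) : Prop where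
  left : (b :: x).reverse = b :: x
  right : (y ++ [a]).reverse = y ++ [a]
  append : (x ++ y).reverse = x ++ y

namespace PalindromicSplit

variable {σ : Type*} {a b : σ} {x y : List σ}

theorem nil : PalindromicSplit a b [] [] := ⟨rfl, rfl, rfl⟩

theorem reverse_append_singleton (h : PalindromicSplit a b x y) : x.reverse ++ [b] = b :: x := by
  simpa using h.left

theorem cons_reverse (h : PalindromicSplit a b x y) : a :: y.reverse = y ++ [a] := by
  simpa using h.right

theorem reverse_append_reverse (h : PalindromicSplit a b x y) :
    y.reverse ++ x.reverse = x ++ y := by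
  simpa using h.append

theorem u (h : PalindromicSplit a b x y) :
    PalindromicSplit a b (x ++ y ++ [b]) y where
  left := by simp [h.reverse_append_reverse]
  right := h.right
  append := calc
    (x ++ y ++ [b] ++ y).reverse = y.reverse ++ (b :: x) ++ y := by
      simp [h.reverse_append_reverse]
    _ = (y.reverse ++ x.reverse) ++ [b] ++ y := by simp [← h.reverse_append_singleton]
    _ = x ++ y ++ [b] ++ y := by rw [h.reverse_append_reverse]

theorem v (h : PalindromicSplit a b x y) :
    PalindromicSplit a b x (a :: (x ++ y)) where
  left := h.left
  right := by simp [h.reverse_append_reverse]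
  append := calc
    (x ++ a :: (x ++ y)).reverse = x ++ (y ++ [a]) ++ x.reverse := by
      simp [h.reverse_append_reverse]
    _ = x ++ a :: (y.reverse ++ x.reverse) := by simp [← h.cons_reverse]
    _ = x ++ a :: (x ++ y) := by rw [h.reverse_append_reverse]

theorem doubling (h : PalindromicSplit a b x y) :
    x ++ a :: (x ++ y ++ b :: y) = x ++ y ++ a :: b :: (x ++ y) := calc
  x ++ a :: (x ++ y ++ b :: y) = x ++ a :: (y.reverse ++ x.reverse) ++ b :: y := by
    rw [h.reverse_append_reverse]; simp
  _ = x ++ (y ++ [a]) ++ (b :: x) ++ y := by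
    rw [← h.cons_reverse, ← h.reverse_append_singleton]; simp
  _ = x ++ y ++ a :: b :: (x ++ y) := by simp

end PalindromicSplit

theorem PbarN.exists_palindromicSplit {n : ℕ} {α β : List AB} (h : PbarN n α β) :
    ∃ x y, α = AB.a :: x ∧ β = y ++ [AB.b] ∧ PalindromicSplit AB.a AB.b x y := by
  induction h with
  | base => exact ⟨[], [], rfl, rfl, .nil⟩
  | u _ ih =>
    obtain ⟨x, y, rfl, rfl, hxy⟩ := ih
    exact ⟨x ++ y ++ [AB.b], y, by simp, rfl, hxy.u⟩
  | v _ ih =>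
    obtain ⟨x, y, rfl, rfl, hxy⟩ := ih
    exact ⟨x, AB.a :: (x ++ y), rfl, by simp, hxy.v⟩

theorem statement_10 (α β : List AB) (h : ∃ n : ℕ, PbarN n α β) :
    (∃ θ : List AB, θ.reverse = θ ∧ α ++ β = AB.a :: (θ ++ [AB.b])) ∧
    (∃ θ : List AB, θ.reverse = θ ∧
      α ++ α ++ β ++ β = AB.a :: (θ ++ AB.a :: AB.b :: (θ ++ [AB.b]))) := by
  obtain ⟨n, hn⟩ := h
  obtain ⟨x, y, rfl, rfl, hxy⟩ := hn.exists_palindromicSplit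
  refine ⟨⟨x ++ y, hxy.append, by simp⟩, ⟨x ++ y, hxy.append, ?_⟩⟩
  simpa using congrArg (· ++ [AB.b]) hxy.doubling
end
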